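/- arXiv:2503.09549 — 3 statements merged into one kernel-verified Lean document; each statement's English description precedes it below -/
import Mathlib

section
/- Let c(x,u) = (1/N)·∑_{k=1}^N (|x_k - x̄|^2 + γ|u_k|^2) be the running cost with γ ∈ (0,1], and let α(y) = (γ/(2N))y². Then for all x, u in ℝ^N, α(‖x - x̃‖ + ‖u - ũ‖) ≤ c(x,u), where x̃ = (x̄,…,x̄) and ũ = 0. In particular the discrete system is strictly dissipative with storage function S = 0 and supply rate η = c. -/
theorem stmt_1 (N : ℕ) (hN : 0 < N) (γ : ℝ) (hγ0 : 0 < γ) (hγ1 : γ ≤ 1)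
    (xbar : ℝ) (c : EuclideanSpace ℝ (Fin N) → EuclideanSpace ℝ (Fin N) → ℝ)
    (hc : ∀ x u, c x u = (1 / N) * ∑ k : Fin N, (|x k - xbar|^2 + γ * |u k|^2))
    (α : ℝ → ℝ) (hα : ∀ y, α y = (γ / (2 * N)) * y^2)
    (xt : EuclideanSpace ℝ (Fin N)) (hxt : ∀ k, xt k = xbar)
    (ut : EuclideanSpace ℝ (Fin N)) (hut : ut = 0) :
    ∀ x u : EuclideanSpace ℝ (Fin N), α (‖x - xt‖ + ‖u - ut‖) ≤ c x u := by
  intro x u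
  rw [hα, hc, hut, sub_zero]
  set a := ‖x - xt‖ with ha
  set b := ‖u‖ with hb
  have ha0 : 0 ≤ a := norm_nonneg _
  have hb0 : 0 ≤ b := norm_nonneg _
  have ha2 : a ^ 2 = ∑ k : Fin N, |x k - xbar| ^ 2 := by
    rw [ha, EuclideanSpace.norm_eq, Real.sq_sqrt (by positivity)]
    refine Finset.sum_congr rfl fun k _ => ?_
    simp [hxt k, Real.norm_eq_abs]
  have hb2 : b ^ 2 = ∑ k : Fin N, |u k| ^ 2 := by
    rw [hb, EuclideanSpace.norm_eq, Real.sq_sqrt (by positivity)]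
    simp [Real.norm_eq_abs]
  have hsum : ∑ k : Fin N, (|x k - xbar| ^ 2 + γ * |u k| ^ 2)
      = a ^ 2 + γ * b ^ 2 := by
    rw [Finset.sum_add_distrib, ← Finset.mul_sum, ha2, hb2]
  rw [hsum]
  have hNpos : (0 : ℝ) < N := by exact_mod_cast hN
  rw [div_mul_eq_mul_div, div_le_iff₀ (by positivity)]
  have hrw : 1 / (N:ℝ) * (a ^ 2 + γ * b ^ 2) * (2 * N) = 2 * (a ^ 2 + γ * b ^ 2) := by
    field_simp
  rw [hrw]
  nlinarith [sq_nonneg (a - b), sq_nonneg b, mul_nonneg (sub_nonneg.2 hγ1) (sq_nonneg b)]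
end

section
/- Let p: ℝ × ℝ → ℝ be bounded by M_p, let β > 0, and define for x ∈ ℝ^N the feedback control u_k = β(x̄ − x_k) − (1/N)∑_{ℓ=1}^N p(x_k, x_ℓ)(x_ℓ − x_k). Then ‖u‖² ≤ 2((β + M_p)² + M_p²)·‖x − x̃‖², where x̃ is the constant vector (x̄,…,x̄). -/
/-! Writing `e = x - x̃`, the differences `x ℓ - x k = e ℓ - e k` make each interaction term at
most `M (|e ℓ| + |e k|)`, so `|u k| ≤ (β + M) |e k| + M · mean |e|`. Squaring with
`(a + b)² ≤ 2 (a² + b²)` and summing over `k`, Cauchy–Schwarz bounds `N · (mean |e|)²` by `‖e‖²`. -/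

open Finset

variable {ι : Type*} [Fintype ι] {p : ℝ → ℝ → ℝ} {M β : ℝ}

lemma abs_interaction_le (hp : ∀ a b, |p a b| ≤ M) (a b c : ℝ) :
    |p a b * (b - a)| ≤ M * |b - c| + M * |a - c| := by
  rw [abs_mul, ← mul_add, abs_sub_comm a]
  exact mul_le_mul (hp _ _) (abs_sub_le _ _ _) (abs_nonneg _) ((abs_nonneg _).trans (hp 0 0))

noncomputable def cheapControl (p : ℝ → ℝ → ℝ) (β c : ℝ) (x : ι → ℝ) (k : ι) : ℝ :=
  β * (c - x k) - (1 / Fintype.card ι) * ∑ ℓ, p (x k) (x ℓ) * (x ℓ - x k)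

lemma card_mul_sq_mean_le_sum_sq (f : ι → ℝ) :
    Fintype.card ι * ((∑ i, f i) / Fintype.card ι) ^ 2 ≤ ∑ i, f i ^ 2 := by
  rcases isEmpty_or_nonempty ι with _ | _
  · simp
  · have h := sum_div_card_sq_le_sum_sq_div_card (s := univ) (f := f)
    rwa [card_univ, le_div_iff₀' (by positivity)] at h

lemma abs_cheapControl_le (hp : ∀ a b, |p a b| ≤ M) (hβ : 0 ≤ β) (c : ℝ) (x : ι → ℝ) (k : ι) :
    |cheapControl p β c x k| ≤
      (β + M) * |x k - c| + M * ((∑ ℓ, |x ℓ - c|) / Fintype.card ι) := by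
  have hN : (0 : ℝ) < Fintype.card ι := by exact_mod_cast Fintype.card_pos_iff.mpr ⟨k⟩
  have hsum : |∑ ℓ, p (x k) (x ℓ) * (x ℓ - x k)| ≤
      M * ∑ ℓ, |x ℓ - c| + Fintype.card ι * (M * |x k - c|) :=
    calc |∑ ℓ, p (x k) (x ℓ) * (x ℓ - x k)|
        ≤ ∑ ℓ, |p (x k) (x ℓ) * (x ℓ - x k)| := abs_sum_le_sum_abs _ _
      _ ≤ ∑ ℓ, (M * |x ℓ - c| + M * |x k - c|) :=
          sum_le_sum fun ℓ _ => abs_interaction_le hp (x k) (x ℓ) c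
      _ = M * ∑ ℓ, |x ℓ - c| + Fintype.card ι * (M * |x k - c|) := by
          rw [sum_add_distrib, ← mul_sum, sum_const, card_univ, nsmul_eq_mul]
  calc |cheapControl p β c x k|
      ≤ |β * (c - x k)| + |1 / Fintype.card ι * ∑ ℓ, p (x k) (x ℓ) * (x ℓ - x k)| :=
        abs_sub _ _
    _ = β * |x k - c| + |∑ ℓ, p (x k) (x ℓ) * (x ℓ - x k)| / Fintype.card ι := by
        rw [abs_mul, abs_mul, abs_of_nonneg hβ, abs_sub_comm, abs_of_pos (one_div_pos.2 hN)]
        ring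
    _ ≤ β * |x k - c| + (M * ∑ ℓ, |x ℓ - c| + Fintype.card ι * (M * |x k - c|)) /
          Fintype.card ι := by gcongr
    _ = (β + M) * |x k - c| + M * ((∑ ℓ, |x ℓ - c|) / Fintype.card ι) := by
        field_simp
        ring

theorem sum_sq_cheapControl_le (hp : ∀ a b, |p a b| ≤ M) (hβ : 0 ≤ β) (c : ℝ) (x : ι → ℝ) :
    ∑ k, cheapControl p β c x k ^ 2 ≤ 2 * ((β + M) ^ 2 + M ^ 2) * ∑ k, (x k - c) ^ 2 := by
  set m := (∑ ℓ, |x ℓ - c|) / Fintype.card ι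
  have hpoint (k : ι) :
      cheapControl p β c x k ^ 2 ≤ 2 * ((β + M) ^ 2 * (x k - c) ^ 2 + M ^ 2 * m ^ 2) :=
    calc cheapControl p β c x k ^ 2
        = |cheapControl p β c x k| ^ 2 := (sq_abs _).symm
      _ ≤ ((β + M) * |x k - c| + M * m) ^ 2 :=
          pow_le_pow_left₀ (abs_nonneg _) (abs_cheapControl_le hp hβ c x k) 2
      _ ≤ 2 * (((β + M) * |x k - c|) ^ 2 + (M * m) ^ 2) := add_sq_le
      _ = 2 * ((β + M) ^ 2 * (x k - c) ^ 2 + M ^ 2 * m ^ 2) := by rw [mul_pow, mul_pow, sq_abs]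
  have hmean : Fintype.card ι * m ^ 2 ≤ ∑ k, (x k - c) ^ 2 := by
    simpa only [sq_abs] using card_mul_sq_mean_le_sum_sq fun k => |x k - c|
  calc ∑ k, cheapControl p β c x k ^ 2
      ≤ ∑ k, 2 * ((β + M) ^ 2 * (x k - c) ^ 2 + M ^ 2 * m ^ 2) := sum_le_sum fun k _ => hpoint k
    _ = 2 * (β + M) ^ 2 * ∑ k, (x k - c) ^ 2 + 2 * M ^ 2 * (Fintype.card ι * m ^ 2) := by
        rw [← mul_sum, sum_add_distrib, ← mul_sum, sum_const, card_univ, nsmul_eq_mul]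
        ring
    _ ≤ 2 * (β + M) ^ 2 * ∑ k, (x k - c) ^ 2 + 2 * M ^ 2 * ∑ k, (x k - c) ^ 2 := by gcongr
    _ = 2 * ((β + M) ^ 2 + M ^ 2) * ∑ k, (x k - c) ^ 2 := by ring

theorem stmt_5_general (N : ℕ) (p : ℝ → ℝ → ℝ) (Mp : ℝ)
    (hp : ∀ a b : ℝ, |p a b| ≤ Mp) (β : ℝ) (hβ : 0 < β)
    (xbar : ℝ) (x : Fin N → ℝ) (u : Fin N → ℝ)
    (hu : ∀ k, u k = β * (xbar - x k) -
      (1 / N) * ∑ ℓ : Fin N, p (x k) (x ℓ) * (x ℓ - x k)) :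
    ∑ k : Fin N, (u k)^2 ≤
      2 * ((β + Mp)^2 + Mp^2) * ∑ k : Fin N, (x k - xbar)^2 := by
  obtain rfl : u = cheapControl p β xbar x :=
    funext fun k => by rw [hu k, cheapControl, Fintype.card_fin]
  exact sum_sq_cheapControl_le hp hβ.le xbar x

theorem stmt_5 (N : ℕ) (hN : 1 ≤ N) (p : ℝ → ℝ → ℝ) (Mp : ℝ)
    (hp : ∀ a b : ℝ, |p a b| ≤ Mp) (β : ℝ) (hβ : 0 < β)
    (xbar : ℝ) (x : Fin N → ℝ) (u : Fin N → ℝ)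
    (hu : ∀ k, u k = β * (xbar - x k) -
      (1 / N) * ∑ ℓ : Fin N, p (x k) (x ℓ) * (x ℓ - x k)) :
    ∑ k : Fin N, (u k)^2 ≤
      2 * ((β + Mp)^2 + Mp^2) * ∑ k : Fin N, (x k - xbar)^2 :=
  stmt_5_general N p Mp hp β hβ xbar x u hu
end

section
/- Let α: [0,∞) → [0,∞) be monotone and let c_n ≥ 0 be a sequence of running costs such that: (i) for every starting index j and initial deviation d_j, the tail cost V_j := ∑_{n=j}^{m−1} τ·c_n satisfies the dissipativity lower bound ∑_{n=j}^{m−1} τ·a_n ≤ V_j where a_n ≥ 0, and (ii) the cheap control bound V_j ≤ C₀·α_j holds with τ·α_{s*} ≤ (C₀/s)·α₀ for some s* < s := ⌊(1−λ)m⌋. Then ∑_{n=s}^{m−1} τ·a_n ≤ (C₀²/(τs))·α₀. -/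
theorem stmt_9 (m : ℕ) (τ lam C₀ α₀ : ℝ) (hτ : 0 < τ) (hlam0 : 0 < lam) (hlam1 : lam < 1)
    (hC₀ : 0 < C₀) (hα₀ : 0 ≤ α₀)
    (a c : ℕ → ℝ) (ha : ∀ n, 0 ≤ a n)
    (V : ℕ → ℝ) (hV : ∀ j, V j = ∑ n ∈ Finset.Ico j m, τ * c n)
    (hdiss : ∀ j, ∑ n ∈ Finset.Ico j m, τ * a n ≤ V j)
    (s : ℕ) (hsdef : s = ⌊(1 - lam) * m⌋₊)
    (sstar : ℕ) (hsstar : sstar < s)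
    (αs : ℝ) (hαs : 0 ≤ αs)
    (hcheap : V sstar ≤ C₀ * αs)
    (hpigeon : τ * αs ≤ (C₀ / s) * α₀) :
    ∑ n ∈ Finset.Ico s m, τ * a n ≤ (C₀^2 / (τ * s)) * α₀ := by
  have hsR : (0:ℝ) < s := by exact_mod_cast Nat.pos_of_ne_zero (by omega)
  have h1 : ∑ n ∈ Finset.Ico s m, τ * a n ≤ ∑ n ∈ Finset.Ico sstar m, τ * a n := by
    apply Finset.sum_le_sum_of_subset_of_nonneg
    · apply Finset.Ico_subset_Ico (le_of_lt hsstar) le_rfl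
    · intro i _ _; exact mul_nonneg hτ.le (ha i)
  have h2 : ∑ n ∈ Finset.Ico sstar m, τ * a n ≤ C₀ * αs := (hdiss sstar).trans hcheap
  have hαs' : αs ≤ C₀ / s * α₀ / τ := by
    rw [le_div_iff₀ hτ, mul_comm]; exact hpigeon
  calc ∑ n ∈ Finset.Ico s m, τ * a n ≤ C₀ * αs := h1.trans h2
    _ ≤ C₀ * (C₀ / s * α₀ / τ) := by
        exact mul_le_mul_of_nonneg_left hαs' hC₀.le
    _ = (C₀^2 / (τ * s)) * α₀ := by field_simp
end
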